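/- arXiv:1706.04229 — 4 statements merged into one kernel-verified Lean document; each statement's English description precedes it below -/
import Mathlib

section
/- Let X_1,...,X_m be random variables with X_i = b on event E_i and X_i = a on E_i^c, where 0 < a < b. For a k-element subset S, the expected log return V(S) = E[ln(∑_{i∈S} X_i / k)] satisfies V(S) = ln(a) + ∑_{q=1}^{k} P(Y_q(S)) · ln(1 + (b−a)/((q−1)b + (k−q+1)a)), where Y_q(S) is the event that at least q of the events {E_i : i ∈ S} occur. -/
open MeasureTheory
open scoped Classical

/-!
If `N ω` of the `k` events occur, the averaged return is `a + N ω (b - a) / k`, so with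
`g q = log (a + q (b - a) / k)` the integrand is `g (N ω) = log a + ∑_{q=1}^{N ω} (g q - g (q - 1))`,
and each increment `g q - g (q - 1)` is the logarithm appearing in the formula.
Writing the sum up to `N ω` as a sum up to `k` of indicators of `{q ≤ N}` and integrating
term by term gives the probabilities `P(Y_q(S))`.
-/

open Finset in
theorem Finset.sum_ite_eq_card_mul_add_card_filter_mul {ι R : Type*} [CommRing R]
    (s : Finset ι) (p : ι → Prop) [DecidablePred p] (a b : R) :
    ∑ i ∈ s, (if p i then b else a) = #s * a + #(s.filter p) * (b - a) := by
  rw [sum_ite, sum_const, sum_const, ← card_filter_add_card_filter_not (s := s) p]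
  simp only [nsmul_eq_mul, Nat.cast_add]
  ring

theorem Finset.sum_Icc_one_sub_pred {M : Type*} [AddCommGroup M] (g : ℕ → M) (n : ℕ) :
    ∑ q ∈ Finset.Icc 1 n, (g q - g (q - 1)) = g n - g 0 := by
  induction n with
  | zero => simp
  | succ n ih => rw [Finset.sum_Icc_succ_top (by omega), ih]; simp

open Finset in
theorem measurable_card_filter_mem {Ω ι : Type*} [MeasurableSpace Ω] (s : Finset ι)
    {E : ι → Set Ω} (hE : ∀ i ∈ s, MeasurableSet (E i)) :
    Measurable fun ω => #(s.filter fun i => ω ∈ E i) := by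
  simp_rw [card_filter]
  exact Finset.measurable_sum _ fun i hi => Measurable.ite (hE i hi) measurable_const measurable_const

theorem sum_Icc_one_eq_sum_indicator {Ω M : Type*} [AddCommMonoid M] {N : Ω → ℕ} {k : ℕ}
    (hNk : ∀ ω, N ω ≤ k) (c : ℕ → M) :
    (fun ω => ∑ q ∈ Finset.Icc 1 (N ω), c q)
      = fun ω => ∑ q ∈ Finset.Icc 1 k, {ω | q ≤ N ω}.indicator (fun _ => c q) ω := by
  ext ω
  simp only [Set.indicator_apply, Set.mem_ofPred_eq, ← Finset.sum_filter]
  congr 1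
  ext q
  simp only [Finset.mem_filter, Finset.mem_Icc]
  have := hNk ω
  omega

theorem integrable_sum_Icc_one {Ω : Type*} [MeasurableSpace Ω] (μ : Measure Ω)
    [IsFiniteMeasure μ] {N : Ω → ℕ} (hN : Measurable N) {k : ℕ} (hNk : ∀ ω, N ω ≤ k)
    (c : ℕ → ℝ) :
    Integrable (fun ω => ∑ q ∈ Finset.Icc 1 (N ω), c q) μ := by
  rw [sum_Icc_one_eq_sum_indicator hNk]
  exact integrable_finsetSum _ fun q _ =>
    (integrable_const (c q)).indicator (measurableSet_le measurable_const hN)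

theorem integral_sum_Icc_one_eq_sum_measureReal {Ω : Type*} [MeasurableSpace Ω]
    (μ : Measure Ω) [IsFiniteMeasure μ] {N : Ω → ℕ} (hN : Measurable N) {k : ℕ}
    (hNk : ∀ ω, N ω ≤ k) (c : ℕ → ℝ) :
    ∫ ω, ∑ q ∈ Finset.Icc 1 (N ω), c q ∂μ = ∑ q ∈ Finset.Icc 1 k, μ.real {ω | q ≤ N ω} * c q := by
  have hlevel (q : ℕ) : MeasurableSet {ω | q ≤ N ω} := measurableSet_le measurable_const hN
  rw [sum_Icc_one_eq_sum_indicator hNk,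
    integral_finsetSum _ fun q _ => (integrable_const (c q)).indicator (hlevel q)]
  simp_rw [integral_indicator_const _ (hlevel _), smul_eq_mul]

theorem Real.log_one_add_div_eq_log_sub_log {a b k q : ℝ} (ha : 0 < a) (hab : a ≤ b)
    (hk : 0 < k) (hq : 1 ≤ q) :
    Real.log (1 + (b - a) / ((q - 1) * b + (k - q + 1) * a))
      = Real.log (a + q * (b - a) / k) - Real.log (a + (q - 1) * (b - a) / k) := by
  set x := a + (q - 1) * (b - a) / k
  have hba : 0 ≤ (b - a) / k := div_nonneg (sub_nonneg.2 hab) hk.le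
  have hx : 0 < x := by
    have : 0 ≤ (q - 1) * ((b - a) / k) := mul_nonneg (sub_nonneg.2 hq) hba
    simp only [x, mul_div_assoc]
    linarith
  have hden : (q - 1) * b + (k - q + 1) * a = k * x := by
    simp only [x]
    field_simp
    ring
  have hnext : a + q * (b - a) / k = x + (b - a) / k := by ring
  rw [hden, hnext, ← Real.log_div (by positivity) hx.ne']
  congr 1
  field_simp

open Finset in
/-- Expansion of the expected log return:
`V(S) = ln a + ∑_{q=1}^k P(Y_q(S)) ln(1 + (b-a)/((q-1)b + (k-q+1)a))`,
where `Y_q(S)` is the event that at least `q` of the events `{E_i : i ∈ S}` occur. -/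
theorem log_return_formula {Ω : Type*} [MeasurableSpace Ω] (μ : Measure Ω)
    [IsProbabilityMeasure μ] {m : ℕ} (E : Fin m → Set Ω)
    (hE : ∀ i, MeasurableSet (E i))
    (a b : ℝ) (ha : 0 < a) (hab : a < b)
    (S : Finset (Fin m)) (k : ℕ) (hk : S.card = k) (hkpos : 0 < k) :
    (∫ ω, Real.log ((∑ i ∈ S, (if ω ∈ E i then b else a)) / k) ∂μ)
      = Real.log a + ∑ q ∈ Finset.Icc 1 k,
          (μ {ω | q ≤ (S.filter fun i => ω ∈ E i).card}).toReal *
            Real.log (1 + (b - a) / (((q : ℝ) - 1) * b + ((k : ℝ) - q + 1) * a)) := by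
  set N : Ω → ℕ := fun ω => #(S.filter fun i => ω ∈ E i)
  set g : ℕ → ℝ := fun q => Real.log (a + q * (b - a) / k)
  have hstep : ∀ q ∈ Icc 1 k,
      Real.log (1 + (b - a) / (((q : ℝ) - 1) * b + ((k : ℝ) - q + 1) * a)) = g q - g (q - 1) := by
    intro q hq
    have hq1 : 1 ≤ q := (mem_Icc.1 hq).1
    simp only [g, Nat.cast_sub hq1, Nat.cast_one]
    exact Real.log_one_add_div_eq_log_sub_log ha hab.le (by exact_mod_cast hkpos)
      (by exact_mod_cast hq1)
  have hintegrand (ω : Ω) :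
      Real.log ((∑ i ∈ S, (if ω ∈ E i then b else a)) / k)
        = Real.log a + ∑ q ∈ Icc 1 (N ω), (g q - g (q - 1)) := by
    rw [sum_Icc_one_sub_pred, sum_ite_eq_card_mul_add_card_filter_mul, hk]
    simp only [g, N, Nat.cast_zero, zero_mul, zero_div, add_zero, add_sub_cancel]
    congr 1
    field_simp
  have hN : Measurable N := measurable_card_filter_mem S fun i _ => hE i
  have hNk (ω : Ω) : N ω ≤ k := hk ▸ card_filter_le S _
  simp_rw [hintegrand]
  rw [integral_add (integrable_const _) (integrable_sum_Icc_one μ hN hNk _), integral_const,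
    probReal_univ, one_smul, integral_sum_Icc_one_eq_sum_measureReal μ hN hNk]
  simp only [measureReal_def]
  exact congrArg _ (sum_congr rfl fun q hq => by rw [hstep q hq])
end

section
/- If events E_1,...,E_m are mutually independent with p_1 ≥ p_2 ≥ ... ≥ p_m, then for each q ∈ [k] the set S = {1,...,k} maximizes P(Y_q(S)) over all k-element subsets S ⊆ [m], where Y_q(S) is the event that at least q of the events {E_i : i ∈ S} occur. -/
open MeasureTheory ProbabilityTheory
open scoped Classical

/-!
Write `S = A ∪ {j}` with `j ∉ A`. By independence of `E j` from the events indexed by `A`,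
`P(at least q+1 of S) = P(at least q+1 of A) + P(exactly q of A) · p_j`, which is monotone
in `p_j`. So replacing an index of `S` outside `{1,…,k}` by a missing index of `{1,…,k}`
never decreases the tail probability, and finitely many such swaps turn `S` into `{1,…,k}`.
-/

theorem Finset.le_of_card_eq_of_exchange {ι α : Type*} [DecidableEq ι] [Preorder α]
    {f : Finset ι → α} {T : Finset ι}
    (hswap : ∀ A i j, i ∉ A → j ∉ A → i ∈ T → j ∉ T → f (insert j A) ≤ f (insert i A))
    {S : Finset ι} (hcard : S.card = T.card) : f S ≤ f T := by
  induction hn : (S \ T).card generalizing S with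
  | zero =>
    rw [Finset.card_eq_zero, Finset.sdiff_eq_empty_iff_subset] at hn
    rw [Finset.eq_of_subset_of_card_le hn hcard.ge]
  | succ n ih =>
    obtain ⟨j, hj⟩ : (S \ T).Nonempty := Finset.card_pos.mp (by omega)
    obtain ⟨i, hi⟩ : (T \ S).Nonempty := by
      rw [← Finset.card_pos, Finset.card_sdiff_comm hcard.symm]
      omega
    rw [Finset.mem_sdiff] at hi hj
    have hiA : i ∉ S.erase j := fun h => hi.2 (Finset.mem_of_mem_erase h)
    calc f S = f (insert j (S.erase j)) := by rw [Finset.insert_erase hj.1]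
      _ ≤ f (insert i (S.erase j)) := hswap _ i j hiA (Finset.notMem_erase j S) hi.1 hj.2
      _ ≤ f T := by
        refine ih ?_ ?_
        · rw [Finset.card_insert_of_notMem hiA, Finset.card_erase_add_one hj.1, hcard]
        · rw [Finset.insert_sdiff_of_mem _ hi.1, Finset.erase_sdiff_comm,
            Finset.card_erase_of_mem (Finset.mem_sdiff.mpr hj), hn, Nat.add_sub_cancel]

section OccurCount

variable {Ω ι : Type*} {E : ι → Set Ω}

noncomputable def occurCount (E : ι → Set Ω) (A : Finset ι) (ω : Ω) : ℕ :=
  (A.filter fun i => ω ∈ E i).card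

theorem occurCount_eq_sum (A : Finset ι) (ω : Ω) :
    occurCount E A ω = ∑ i ∈ A, if ω ∈ E i then 1 else 0 :=
  Finset.card_filter _ _

theorem occurCount_insert [DecidableEq ι] {A : Finset ι} {j : ι} (hj : j ∉ A) (ω : Ω) :
    occurCount E (insert j A) ω = occurCount E A ω + if ω ∈ E j then 1 else 0 := by
  rw [occurCount_eq_sum, occurCount_eq_sum, Finset.sum_insert hj, add_comm]

theorem measurable_occurCount {m : MeasurableSpace Ω} {A : Finset ι}
    (hE : ∀ i ∈ A, MeasurableSet[m] (E i)) : Measurable[m] (occurCount E A) := by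
  simp_rw [funext (occurCount_eq_sum (E := E) A)]
  exact Finset.measurable_sum _ fun i hi => Measurable.ite (hE i hi) measurable_const
    measurable_const

theorem setOf_succ_le_occurCount_insert [DecidableEq ι] {A : Finset ι} {j : ι} (hj : j ∉ A)
    (q : ℕ) :
    {ω | q + 1 ≤ occurCount E (insert j A) ω} =
      {ω | q + 1 ≤ occurCount E A ω} ∪ ({ω | occurCount E A ω = q} ∩ E j) := by
  ext ω
  simp only [Set.mem_ofPred_eq, Set.mem_union, Set.mem_inter_iff, occurCount_insert hj ω]
  by_cases h : ω ∈ E j <;> simp [h]; omega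

variable [DecidableEq ι] [MeasurableSpace Ω] {μ : Measure Ω}

theorem measure_succ_le_occurCount_insert (hE : ∀ i, MeasurableSet (E i))
    (hindep : iIndepSet E μ) {A : Finset ι} {j : ι} (hj : j ∉ A) (q : ℕ) :
    μ {ω | q + 1 ≤ occurCount E (insert j A) ω} =
      μ {ω | q + 1 ≤ occurCount E A ω} + μ {ω | occurCount E A ω = q} * μ (E j) := by
  have hdisj : Disjoint {ω | q + 1 ≤ occurCount E A ω} ({ω | occurCount E A ω = q} ∩ E j) :=
    Set.disjoint_left.mpr fun ω h1 h2 => by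
      simp only [Set.mem_ofPred_eq, Set.mem_inter_iff] at h1 h2
      omega
  have hmeas : MeasurableSet ({ω | occurCount E A ω = q} ∩ E j) :=
    ((measurable_occurCount fun i _ => hE i) (measurableSet_singleton q)).inter (hE j)
  have hindepAj := hindep.indep_generateFrom_of_disjoint hE (A : Set ι) {j}
    (Set.disjoint_singleton_right.mpr hj)
  rw [setOf_succ_le_occurCount_insert hj, measure_union hdisj hmeas]
  congr 1
  refine (Indep_iff _ _ _).1 hindepAj _ _ ?_ ?_
  · exact measurable_occurCount (fun i hi => MeasurableSpace.measurableSet_generateFrom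
      (by exact ⟨i, hi, rfl⟩)) (measurableSet_singleton q)
  · exact MeasurableSpace.measurableSet_generateFrom ⟨j, rfl, rfl⟩

theorem measure_le_occurCount_insert_mono (hE : ∀ i, MeasurableSet (E i))
    (hindep : iIndepSet E μ) {A : Finset ι} {i j : ι} (hi : i ∉ A) (hj : j ∉ A)
    (hij : μ (E j) ≤ μ (E i)) (q : ℕ) :
    μ {ω | q ≤ occurCount E (insert j A) ω} ≤ μ {ω | q ≤ occurCount E (insert i A) ω} := by
  cases q with
  | zero => simp
  | succ q =>
    rw [measure_succ_le_occurCount_insert hE hindep hj,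
      measure_succ_le_occurCount_insert hE hindep hi]
    gcongr

end OccurCount

theorem top_k_maximizes_tail_general {Ω : Type*} [MeasurableSpace Ω] (μ : Measure Ω)
    [IsProbabilityMeasure μ] {m : ℕ} (E : Fin m → Set Ω)
    (hE : ∀ i, MeasurableSet (E i)) (hindep : iIndepSet E μ)
    (hmono : ∀ i j : Fin m, i ≤ j → μ (E j) ≤ μ (E i))
    (k : ℕ)
    (q : ℕ)
    (S : Finset (Fin m)) (hS : S.card = k) :
    (μ {ω | q ≤ (S.filter fun i => ω ∈ E i).card}).toReal ≤
      (μ {ω | q ≤ ((Finset.univ.filter fun i : Fin m => (i : ℕ) < k).filter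
          fun i => ω ∈ E i).card}).toReal := by
  have hk : k ≤ m := hS ▸ S.card_le_univ.trans_eq (Fintype.card_fin m)
  have hcard : S.card = (Finset.univ.filter fun i : Fin m => (i : ℕ) < k).card := by
    rw [Fin.card_filter_val_lt, min_eq_right hk, hS]
  refine ENNReal.toReal_mono (measure_ne_top μ _) ?_
  refine Finset.le_of_card_eq_of_exchange (f := fun A => μ {ω | q ≤ occurCount E A ω})
    (fun A i j hi hj hiT hjT => ?_) hcard
  refine measure_le_occurCount_insert_mono hE hindep hi hj (hmono i j ?_) q
  simp only [Finset.mem_filter, Finset.mem_univ, true_and, not_lt] at hiT hjT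
  exact Fin.le_def.mpr (by omega)

/-- For mutually independent events with `p_1 ≥ ... ≥ p_m`, for each `q ∈ [k]` the set
`{1,...,k}` maximizes `P(Y_q(S))` over all `k`-element subsets, where `Y_q(S)` is the
event that at least `q` of the events indexed by `S` occur. -/
theorem top_k_maximizes_tail {Ω : Type*} [MeasurableSpace Ω] (μ : Measure Ω)
    [IsProbabilityMeasure μ] {m : ℕ} (E : Fin m → Set Ω)
    (hE : ∀ i, MeasurableSet (E i)) (hindep : iIndepSet E μ)
    (hmono : ∀ i j : Fin m, i ≤ j → μ (E j) ≤ μ (E i))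
    (k : ℕ) (hk : k ≤ m)
    (q : ℕ) (hq1 : 1 ≤ q) (hqk : q ≤ k)
    (S : Finset (Fin m)) (hS : S.card = k) :
    (μ {ω | q ≤ (S.filter fun i => ω ∈ E i).card}).toReal ≤
      (μ {ω | q ≤ ((Finset.univ.filter fun i : Fin m => (i : ℕ) < k).filter
          fun i => ω ∈ E i).card}).toReal :=
  top_k_maximizes_tail_general μ E hE hindep hmono k q S hS
end

section
/- Let E_1,...,E_m be mutually independent events and S a k-element subset with r ∈ S, t ∉ S, and P(E_t) ≥ P(E_r). Then for every q ∈ [k], P(Y_q(S)) ≤ P(Y_q(S ∪ {t} \ {r})), i.e., swapping in the more probable event does not decrease the probability that at least q events occur. -/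
open MeasureTheory ProbabilityTheory
open scoped Classical

/-!
Write `N_T` for the number of events indexed by `T` that occur. For `j ∉ T`, the event
`q + 1 ≤ N_{T ∪ {j}}` is the disjoint union of `q + 1 ≤ N_T` and `{N_T = q} ∩ E j`, and `N_T` is
independent of `E j`. Hence `P(q + 1 ≤ N_{T ∪ {j}}) = P(q + 1 ≤ N_T) + P(N_T = q) P(E j)`, which is
monotone in `P(E j)`. Apply this with `T = S \ {r}` and `j = r`, resp. `j = t`.
-/

open Finset

section

variable {Ω ι : Type*} {E : ι → Set Ω}

lemma setOf_add_one_le_card_filter_insert [DecidableEq ι] {T : Finset ι} {j : ι} (hj : j ∉ T)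
    (q : ℕ) :
    {ω | q + 1 ≤ ((insert j T).filter fun i => ω ∈ E i).card} =
      {ω | q + 1 ≤ (T.filter fun i => ω ∈ E i).card} ∪
        ({ω | (T.filter fun i => ω ∈ E i).card = q} ∩ E j) := by
  ext ω
  by_cases hωj : ω ∈ E j
  · have hj' : j ∉ T.filter fun i => ω ∈ E i := fun h => hj (mem_of_mem_filter _ h)
    simp only [filter_insert, hωj, if_true, card_insert_of_notMem hj', Set.mem_ofPred_eq,
      Set.mem_union, Set.mem_inter_iff, and_true]
    omega
  · simp [filter_insert, hωj]

lemma measurable_card_filter_mem_s8 (T : Finset ι) :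
    Measurable[MeasurableSpace.generateFrom {u | ∃ i ∈ (T : Set ι), E i = u}]
      fun ω => (T.filter fun i => ω ∈ E i).card := by
  simp_rw [card_filter]
  refine Finset.measurable_sum _ fun i hi => Measurable.ite ?_ measurable_const measurable_const
  exact MeasurableSpace.measurableSet_generateFrom ⟨i, mem_coe.2 hi, rfl⟩

lemma measure_add_one_le_card_filter_insert [DecidableEq ι] [mΩ : MeasurableSpace Ω]
    {μ : Measure Ω} [IsProbabilityMeasure μ]
    (hE : ∀ i, MeasurableSet (E i)) (hindep : iIndepSet E μ)
    {T : Finset ι} {j : ι} (hj : j ∉ T) (q : ℕ) :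
    μ {ω | q + 1 ≤ ((insert j T).filter fun i => ω ∈ E i).card} =
      μ {ω | q + 1 ≤ (T.filter fun i => ω ∈ E i).card} +
        μ {ω | (T.filter fun i => ω ∈ E i).card = q} * μ (E j) := by
  let mT := MeasurableSpace.generateFrom {u | ∃ i ∈ (T : Set ι), E i = u}
  have hgen : mT ≤ mΩ := MeasurableSpace.generateFrom_le fun _ ⟨i, _, hi⟩ => hi ▸ hE i
  have heq : MeasurableSet[mT] {ω | (T.filter fun i => ω ∈ E i).card = q} :=
    measurable_card_filter_mem_s8 T (measurableSet_singleton _)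
  have hindep_j : IndepSet {ω | (T.filter fun i => ω ∈ E i).card = q} (E j) μ :=
    (hindep.indep_generateFrom_of_disjoint hE (T : Set ι) {j}
        (Set.disjoint_singleton_right.2 hj)).indepSet_of_measurableSet heq
      (MeasurableSpace.measurableSet_generateFrom ⟨j, rfl, rfl⟩)
  have hdisj : Disjoint {ω | q + 1 ≤ (T.filter fun i => ω ∈ E i).card}
      ({ω | (T.filter fun i => ω ∈ E i).card = q} ∩ E j) := by
    rw [Set.disjoint_left]
    rintro ω hle ⟨hpred, -⟩
    simp only [Set.mem_ofPred_eq] at hle hpred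
    omega
  rw [setOf_add_one_le_card_filter_insert hj, measure_union hdisj ((hgen _ heq).inter (hE j)),
    hindep_j.measure_inter_eq_mul]

end

theorem swap_increases_tail_general {Ω : Type*} [MeasurableSpace Ω] (μ : Measure Ω)
    [IsProbabilityMeasure μ] {m : ℕ} (E : Fin m → Set Ω)
    (hE : ∀ i, MeasurableSet (E i)) (hindep : iIndepSet E μ)
    (S : Finset (Fin m))
    (r t : Fin m) (hr : r ∈ S) (ht : t ∉ S)
    (hpt : μ (E r) ≤ μ (E t))
    (q : ℕ) (hq1 : 1 ≤ q) :
    (μ {ω | q ≤ (S.filter fun i => ω ∈ E i).card}).toReal ≤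
      (μ {ω | q ≤ ((insert t (S.erase r)).filter fun i => ω ∈ E i).card}).toReal := by
  obtain ⟨p, rfl⟩ := Nat.exists_eq_add_of_le' hq1
  have hr' : r ∉ S.erase r := notMem_erase r S
  have ht' : t ∉ S.erase r := fun h => ht (mem_of_mem_erase h)
  have hS : μ {ω | p + 1 ≤ (S.filter fun i => ω ∈ E i).card} =
      μ {ω | p + 1 ≤ ((insert r (S.erase r)).filter fun i => ω ∈ E i).card} := by
    rw [insert_erase hr]
  rw [hS, measure_add_one_le_card_filter_insert hE hindep hr',
    measure_add_one_le_card_filter_insert hE hindep ht']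
  exact ENNReal.toReal_mono (by finiteness) (by gcongr)

/-- Swap lemma: for mutually independent events, if `r ∈ S`, `t ∉ S` and
`P(E_t) ≥ P(E_r)`, then for every `q ∈ [k]` (with `|S| = k`),
`P(Y_q(S)) ≤ P(Y_q(S ∪ {t} \ {r}))`. -/
theorem swap_increases_tail {Ω : Type*} [MeasurableSpace Ω] (μ : Measure Ω)
    [IsProbabilityMeasure μ] {m : ℕ} (E : Fin m → Set Ω)
    (hE : ∀ i, MeasurableSet (E i)) (hindep : iIndepSet E μ)
    (k : ℕ) (S : Finset (Fin m)) (hS : S.card = k)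
    (r t : Fin m) (hr : r ∈ S) (ht : t ∉ S)
    (hpt : μ (E r) ≤ μ (E t))
    (q : ℕ) (hq1 : 1 ≤ q) (hqk : q ≤ k) :
    (μ {ω | q ≤ (S.filter fun i => ω ∈ E i).card}).toReal ≤
      (μ {ω | q ≤ ((insert t (S.erase r)).filter fun i => ω ∈ E i).card}).toReal :=
  swap_increases_tail_general μ E hE hindep S r t hr ht hpt q hq1
end

section
/- Let S_L be a log-optimal k-portfolio and S_W a picking-winners-optimal k-portfolio. Suppose there exist λ ∈ [0,1) and p ∈ (0, 1/k] such that for every k-element portfolio considered, the probability of exactly any given subset T of its events occurring lies in [(1−λ)p^{|T|}(1−p)^{k−|T|}, (1+λ)p^{|T|}(1−p)^{k−|T|}]. Then (U(S_W) − U(S_L)) / U(S_W) ≤ 2ζ(3)λkp(1−p) / ( ln(1 + (b−a)/(ka)) · (1−λ) · (1 − (1−p)^k) ). -/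
/-!
On the cell of outcomes where, among the events of a `k`-portfolio `S`, exactly those indexed by
`T` occur, the mean return of `S` is `a (1 + |T| x)` with `x = (b - a) / (k a)`. Hence
`V(S) = ln a + ln (1 + x) U(S) + R(S)`, where `R(S)` sums `P(cell T) (ln (1 + |T| x) - ln (1 + x))`
over the nonempty `T ⊆ S`. Log-optimality of `S_L` gives
`ln (1 + x) (U(S_W) - U(S_L)) ≤ R(S_L) - R(S_W)`, and by the dependency assumption this is at most
`2λ` times the value of `R` for independent events with probability `p`. As
`0 ≤ ln (1 + j x) - ln (1 + x) ≤ C(j, 2)` for `j ≥ 1`, and a binomial count has second factorial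
moment `C(k, 2) p²`, that value is at most `C(k, 2) p² ≤ k p (1 - p) / 2` since `k p ≤ 1`.
Dividing by `U(S_W) ≥ (1 - λ)(1 - (1 - p)^k)` and using `2 ζ(3) ≥ 1` gives the bound.
-/

open MeasureTheory
open scoped Classical

namespace Portfolio

open Finset Real

theorem sum_powerset_filter_nonempty_eq_sub {ι M : Type*} [AddCommGroup M] (S : Finset ι)
    (f : Finset ι → M) :
    ∑ T ∈ S.powerset with T.Nonempty, f T = ∑ T ∈ S.powerset, f T - f ∅ := by
  have hempty : {T ∈ S.powerset | ¬T.Nonempty} = {∅} := by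
    ext T
    simp +contextual [not_nonempty_iff_eq_empty]
  rw [← sum_filter_add_sum_filter_not S.powerset Finset.Nonempty, hempty, sum_singleton,
    add_sub_cancel_right]

theorem sum_powerset_nonempty_card_eq_of_card_eq {ι κ M : Type*} [AddCommGroup M]
    {S₁ : Finset ι} {S₂ : Finset κ} (h : #S₁ = #S₂) (f : ℕ → M) :
    ∑ T ∈ S₁.powerset with T.Nonempty, f #T = ∑ T ∈ S₂.powerset with T.Nonempty, f #T := by
  rw [sum_powerset_filter_nonempty_eq_sub, sum_powerset_filter_nonempty_eq_sub, sum_powerset_apply_card,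
    sum_powerset_apply_card, h, card_empty, card_empty]

theorem sum_range_choose_mul_choose_two {R : Type*} [CommSemiring R] (p q : R) (n : ℕ) :
    ∑ j ∈ range (n + 1), (n.choose j * j.choose 2 : ℕ) * (p ^ j * q ^ (n - j)) =
      n.choose 2 * p ^ 2 * (p + q) ^ (n - 2) := by
  obtain _ | _ | n := n
  · simp
  · simp [sum_range_succ]
  rw [sum_range_succ', sum_range_succ', Nat.add_sub_cancel, add_pow, mul_sum]
  simp only [Nat.choose_zero_succ, Nat.choose_succ_self, mul_zero, Nat.cast_zero, zero_mul,
    add_zero]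
  refine sum_congr rfl fun j hj => ?_
  rw [Nat.choose_mul (by omega : 2 ≤ j + 2), Nat.add_sub_cancel, Nat.add_sub_add_right]
  push_cast
  ring

theorem sum_powerset_choose_two_mul {ι R : Type*} [CommSemiring R] (S : Finset ι) (p q : R) :
    ∑ T ∈ S.powerset, ((#T).choose 2 : R) * (p ^ #T * q ^ (#S - #T)) =
      (#S).choose 2 * p ^ 2 * (p + q) ^ (#S - 2) := by
  rw [sum_powerset_apply_card (fun j => (j.choose 2 : R) * (p ^ j * q ^ (#S - j))),
    ← sum_range_choose_mul_choose_two]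
  refine sum_congr rfl fun j _ => ?_
  rw [nsmul_eq_mul]
  push_cast
  ring

theorem sum_powerset_nonempty_pow_mul {ι : Type*} (S : Finset ι) (p : ℝ) :
    ∑ T ∈ S.powerset with T.Nonempty, p ^ #T * (1 - p) ^ (#S - #T) = 1 - (1 - p) ^ #S := by
  rw [sum_powerset_filter_nonempty_eq_sub, sum_pow_mul_eq_add_pow]
  simp

theorem two_mul_choose_two_mul_sq_le {k : ℕ} {p : ℝ} (hp : 0 ≤ p) (hkp : k * p ≤ 1) :
    2 * (k.choose 2 * p ^ 2) ≤ k * p * (1 - p) := by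
  rw [Nat.cast_choose_two]
  nlinarith [mul_nonneg (Nat.cast_nonneg k) hp]

theorem log_one_add_le_log_one_add_nat_mul {x : ℝ} (hx : 0 ≤ x) {j : ℕ} (hj : 1 ≤ j) :
    log (1 + x) ≤ log (1 + j * x) := by
  have hj' : (1 : ℝ) ≤ j := by exact_mod_cast hj
  exact log_le_log (by positivity) (by nlinarith)

theorem log_one_add_nat_mul_sub_log_le_choose_two {x : ℝ} (hx : 0 ≤ x) {j : ℕ} (hj : 1 ≤ j) :
    log (1 + j * x) - log (1 + x) ≤ j.choose 2 := by
  have hj' : (1 : ℝ) ≤ j := by exact_mod_cast hj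
  have hlog : log (1 + j * x) ≤ log j + log (1 + x) := by
    rw [← log_mul (by positivity) (by positivity)]
    exact log_le_log (by positivity) (by nlinarith)
  have hsub : (j : ℝ) - 1 ≤ j.choose 2 := by
    rw [Nat.cast_choose_two]
    rcases hj.eq_or_lt with rfl | h2
    · norm_num
    · have : (2 : ℝ) ≤ j := by exact_mod_cast h2
      nlinarith
  linarith [log_le_sub_one_of_pos (by positivity : (0 : ℝ) < j)]

theorem sum_powerset_mul_log_one_add_eq {ι : Type*} (S : Finset ι) (w : Finset ι → ℝ) (x : ℝ) :
    ∑ T ∈ S.powerset, w T * log (1 + #T * x) =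
      log (1 + x) * ∑ T ∈ S.powerset with T.Nonempty, w T +
        ∑ T ∈ S.powerset with T.Nonempty, w T * (log (1 + #T * x) - log (1 + x)) := by
  have h := sum_powerset_filter_nonempty_eq_sub S fun T => w T * log (1 + #T * x)
  simp only [card_empty, Nat.cast_zero, zero_mul, add_zero, log_one, mul_zero, sub_zero] at h
  rw [← h, mul_sum, ← sum_add_distrib]
  exact sum_congr rfl fun T _ => by ring

theorem one_le_tsum_one_div_add_one_pow {s : ℕ} (hs : 1 < s) :
    1 ≤ ∑' n : ℕ, 1 / ((n : ℝ) + 1) ^ s := by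
  have hsum : Summable fun n : ℕ => 1 / ((n : ℝ) + 1) ^ s := by
    simpa using (summable_nat_add_iff 1).2 (Real.summable_one_div_nat_pow.2 hs)
  simpa using hsum.le_tsum 0 fun n _ => by positivity

theorem sub_div_le_of_mul_sub_le {h c N z u v : ℝ} (hh : 0 < h) (hc : 0 < c) (hcu : c ≤ u)
    (hN : 0 ≤ N) (hz : 1 ≤ z) (hgap : h * (u - v) ≤ N) : (u - v) / u ≤ z * N / (h * c) := by
  rw [div_le_div_iff₀ (hc.trans_le hcu) (mul_pos hh hc)]
  calc (u - v) * (h * c) = h * (u - v) * c := by ring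
    _ ≤ N * u := mul_le_mul hgap hcu hc.le hN
    _ ≤ z * N * u := by
        rw [mul_assoc]
        exact le_mul_of_one_le_left (mul_nonneg hN (hc.le.trans hcu)) hz

section Cells

variable {Ω ι : Type*} [DecidableEq ι] (E : ι → Set Ω) (S : Finset ι)

def cell (T : Finset ι) : Set Ω := (⋂ i ∈ T, E i) ∩ ⋂ i ∈ S \ T, (E i)ᶜ

variable {E S}

theorem mem_cell_iff {T : Finset ι} (hT : T ⊆ S) {ω : Ω} :
    ω ∈ cell E S T ↔ S.filter (ω ∈ E ·) = T := by
  simp only [cell, Set.mem_inter_iff, Set.mem_iInter, Set.mem_compl_iff, mem_sdiff,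
    Finset.ext_iff, mem_filter]
  constructor
  · rintro ⟨hin, hout⟩ i
    exact ⟨fun ⟨hi, hω⟩ => by_contra fun hiT => hout i ⟨hi, hiT⟩ hω,
      fun hi => ⟨hT hi, hin i hi⟩⟩
  · intro h
    exact ⟨fun i hi => ((h i).2 hi).2, fun i ⟨hi, hiT⟩ hω => hiT ((h i).1 ⟨hi, hω⟩)⟩

variable [MeasurableSpace Ω]

theorem measurableSet_cell (hE : ∀ i, MeasurableSet (E i)) (T : Finset ι) :
    MeasurableSet (cell E S T) :=
  (MeasurableSet.biInter T.countable_toSet fun i _ => hE i).inter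
    (MeasurableSet.biInter (S \ T).countable_toSet fun i _ => (hE i).compl)

variable (μ : Measure Ω)

theorem integral_comp_filter_eq_sum_cell [IsFiniteMeasure μ] (hE : ∀ i, MeasurableSet (E i))
    (F : Finset ι → ℝ) :
    ∫ ω, F (S.filter (ω ∈ E ·)) ∂μ = ∑ T ∈ S.powerset, μ.real (cell E S T) * F T := by
  have hF : ∀ ω, F (S.filter (ω ∈ E ·)) =
      ∑ T ∈ S.powerset, (cell E S T).indicator (fun _ => F T) ω := by
    intro ω
    rw [sum_eq_single_of_mem _ (mem_powerset.2 (filter_subset (ω ∈ E ·) S)),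
      Set.indicator_of_mem ((mem_cell_iff (filter_subset (ω ∈ E ·) S)).2 rfl)]
    intro T hT hne
    exact Set.indicator_of_notMem (fun h => hne ((mem_cell_iff (mem_powerset.1 hT)).1 h).symm) _
  simp_rw [hF]
  rw [integral_finsetSum _ fun T _ => (integrable_const _).indicator (measurableSet_cell hE T)]
  simp only [integral_indicator_const _ (measurableSet_cell hE _), smul_eq_mul]

theorem sum_measureReal_cell [IsProbabilityMeasure μ] (hE : ∀ i, MeasurableSet (E i)) :
    ∑ T ∈ S.powerset, μ.real (cell E S T) = 1 := by
  simpa using (integral_comp_filter_eq_sum_cell μ hE fun _ => 1).symm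

theorem measureReal_biUnion_eq_sum_cell [IsFiniteMeasure μ] (hE : ∀ i, MeasurableSet (E i)) :
    μ.real (⋃ i ∈ S, E i) = ∑ T ∈ S.powerset with T.Nonempty, μ.real (cell E S T) := by
  have h := integral_comp_filter_eq_sum_cell (S := S) μ hE fun T => if T.Nonempty then 1 else 0
  rw [sum_filter, ← integral_indicator_one (S.measurableSet_biUnion fun i _ => hE i)]
  simp only [mul_ite, mul_one, mul_zero] at h
  rw [← h]
  congr 1
  ext ω
  simp [Set.indicator, filter_nonempty_iff]

theorem integral_log_mean_return_eq [IsProbabilityMeasure μ] (hE : ∀ i, MeasurableSet (E i))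
    {a b : ℝ} (ha : 0 < a) (hab : a ≤ b) {k : ℕ} (hk : 0 < k) (hS : #S = k) :
    ∫ ω, log ((∑ i ∈ S, if ω ∈ E i then b else a) / k) ∂μ =
      log a + ∑ T ∈ S.powerset, μ.real (cell E S T) * log (1 + #T * ((b - a) / (k * a))) := by
  have hx : 0 ≤ (b - a) / (k * a) := div_nonneg (sub_nonneg.2 hab) (by positivity)
  have hpt : ∀ ω, log ((∑ i ∈ S, if ω ∈ E i then b else a) / k) =
      log a + log (1 + #(S.filter (ω ∈ E ·)) * ((b - a) / (k * a))) := by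
    intro ω
    have hcard := S.card_filter_add_card_filter_not (ω ∈ E ·)
    rw [sum_ite, sum_const, sum_const, nsmul_eq_mul, nsmul_eq_mul,
      ← log_mul ha.ne' (by positivity)]
    congr 1
    rw [← Nat.cast_inj (R := ℝ), Nat.cast_add, hS] at hcard
    field_simp
    linear_combination a * hcard
  simp_rw [hpt]
  rw [integral_comp_filter_eq_sum_cell μ hE fun T => log a + log (1 + #T * ((b - a) / (k * a)))]
  simp only [mul_add, sum_add_distrib, ← sum_mul, sum_measureReal_cell μ hE, one_mul]

end Cells

section Dependency

variable {ι : Type*} {lam p : ℝ} {k : ℕ} {S : Finset ι} {w : Finset ι → ℝ}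

def DependencyBound (lam p : ℝ) (k : ℕ) (S : Finset ι) (w : Finset ι → ℝ) : Prop :=
  ∀ T ⊆ S, T.Nonempty → (1 - lam) * p ^ #T * (1 - p) ^ (k - #T) ≤ w T ∧
    w T ≤ (1 + lam) * p ^ #T * (1 - p) ^ (k - #T)

theorem DependencyBound.le_sum_mul (h : DependencyBound lam p k S w) {φ : ℕ → ℝ}
    (hφ : ∀ j, 1 ≤ j → 0 ≤ φ j) :
    (1 - lam) * ∑ T ∈ S.powerset with T.Nonempty, p ^ #T * (1 - p) ^ (k - #T) * φ #T ≤
      ∑ T ∈ S.powerset with T.Nonempty, w T * φ #T := by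
  rw [mul_sum]
  refine sum_le_sum fun T hT => ?_
  obtain ⟨hTS, hT⟩ := mem_filter.1 hT
  rw [← mul_assoc, ← mul_assoc]
  exact mul_le_mul_of_nonneg_right (h T (mem_powerset.1 hTS) hT).1 (hφ _ (card_pos.2 hT))

theorem DependencyBound.sum_mul_le (h : DependencyBound lam p k S w) {φ : ℕ → ℝ}
    (hφ : ∀ j, 1 ≤ j → 0 ≤ φ j) :
    ∑ T ∈ S.powerset with T.Nonempty, w T * φ #T ≤
      (1 + lam) * ∑ T ∈ S.powerset with T.Nonempty, p ^ #T * (1 - p) ^ (k - #T) * φ #T := by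
  rw [mul_sum]
  refine sum_le_sum fun T hT => ?_
  obtain ⟨hTS, hT⟩ := mem_filter.1 hT
  rw [← mul_assoc, ← mul_assoc]
  exact mul_le_mul_of_nonneg_right (h T (mem_powerset.1 hTS) hT).2 (hφ _ (card_pos.2 hT))

theorem DependencyBound.le_sum (h : DependencyBound lam p k S w) (hS : #S = k) :
    (1 - lam) * (1 - (1 - p) ^ k) ≤ ∑ T ∈ S.powerset with T.Nonempty, w T := by
  simpa [← hS, sum_powerset_nonempty_pow_mul] using
    h.le_sum_mul (φ := fun _ => 1) fun _ _ => zero_le_one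

theorem DependencyBound.sum_mul_sub_sum_mul_le {S' : Finset ι} {w' : Finset ι → ℝ}
    (h : DependencyBound lam p k S w) (h' : DependencyBound lam p k S' w')
    (hS : #S = k) (hS' : #S' = k) (hlam : 0 ≤ lam) (hp : 0 ≤ p) (hp1 : p ≤ 1) {φ : ℕ → ℝ}
    (hφ : ∀ j, 1 ≤ j → 0 ≤ φ j) (hφ2 : ∀ j, 1 ≤ j → φ j ≤ j.choose 2) :
    ∑ T ∈ S'.powerset with T.Nonempty, w' T * φ #T -
        ∑ T ∈ S.powerset with T.Nonempty, w T * φ #T ≤ 2 * lam * (k.choose 2 * p ^ 2) := by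
  set D := ∑ T ∈ S.powerset with T.Nonempty, p ^ #T * (1 - p) ^ (k - #T) * φ #T
  have hD' : ∑ T ∈ S'.powerset with T.Nonempty, p ^ #T * (1 - p) ^ (k - #T) * φ #T = D :=
    sum_powerset_nonempty_card_eq_of_card_eq (hS'.trans hS.symm)
      fun j => p ^ j * (1 - p) ^ (k - j) * φ j
  have hD : D ≤ k.choose 2 * p ^ 2 := calc
    D ≤ ∑ T ∈ S.powerset with T.Nonempty,
          ((#T).choose 2 : ℝ) * (p ^ #T * (1 - p) ^ (#S - #T)) := by
        refine sum_le_sum fun T hT => ?_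
        have := hφ2 _ (card_pos.2 (mem_filter.1 hT).2)
        have : 0 ≤ 1 - p := sub_nonneg.2 hp1
        rw [hS, mul_comm]
        gcongr
    _ = k.choose 2 * p ^ 2 := by
        rw [sum_powerset_filter_nonempty_eq_sub, sum_powerset_choose_two_mul, hS]
        simp
  have hlow := h.le_sum_mul hφ
  have hup := h'.sum_mul_le hφ
  rw [hD'] at hup
  calc _ ≤ (1 + lam) * D - (1 - lam) * D := by linarith
    _ = 2 * lam * D := by ring
    _ ≤ 2 * lam * (k.choose 2 * p ^ 2) := by gcongr

end Dependency

end Portfolio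

open Portfolio

theorem picking_winners_vs_log_optimal_general {Ω : Type*} [MeasurableSpace Ω] (μ : Measure Ω)
    [IsProbabilityMeasure μ] {m : ℕ} (E : Fin m → Set Ω)
    (hE : ∀ i, MeasurableSet (E i))
    (a b : ℝ) (ha : 0 < a) (hab : a < b)
    (k : ℕ) (hk : 1 ≤ k)
    (lam p : ℝ) (hlam : lam ∈ Set.Ico (0 : ℝ) 1) (hp : 0 < p) (hpk : p ≤ 1 / k)
    (hdep : ∀ S : Finset (Fin m), S.card = k → ∀ T ⊆ S, T.Nonempty →
      (1 - lam) * p ^ T.card * (1 - p) ^ (k - T.card) ≤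
          (μ ((⋂ i ∈ T, E i) ∩ (⋂ i ∈ S \ T, (E i)ᶜ))).toReal ∧
        (μ ((⋂ i ∈ T, E i) ∩ (⋂ i ∈ S \ T, (E i)ᶜ))).toReal ≤
          (1 + lam) * p ^ T.card * (1 - p) ^ (k - T.card))
    (SW SL : Finset (Fin m)) (hSW : SW.card = k) (hSL : SL.card = k)
    (hSLopt : ∀ S : Finset (Fin m), S.card = k →
      (∫ ω, Real.log ((∑ i ∈ S, (if ω ∈ E i then b else a)) / k) ∂μ) ≤
        ∫ ω, Real.log ((∑ i ∈ SL, (if ω ∈ E i then b else a)) / k) ∂μ) :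
    ((μ (⋃ i ∈ SW, E i)).toReal - (μ (⋃ i ∈ SL, E i)).toReal) /
        (μ (⋃ i ∈ SW, E i)).toReal ≤
      2 * (∑' n : ℕ, 1 / ((n : ℝ) + 1) ^ 3) * lam * k * p * (1 - p) /
        (Real.log (1 + (b - a) / (k * a)) * (1 - lam) * (1 - (1 - p) ^ k)) := by
  obtain ⟨hlam0, hlam1⟩ := hlam
  have hk0 : (0 : ℝ) < k := by exact_mod_cast hk
  have hkp : k * p ≤ 1 := by rwa [le_div_iff₀ hk0, mul_comm] at hpk
  have hp1 : p ≤ 1 := by nlinarith [(Nat.one_le_cast (α := ℝ)).2 hk]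
  set x := (b - a) / (k * a)
  have hx : 0 < x := div_pos (by linarith) (by positivity)
  have hW : DependencyBound lam p k SW fun T => μ.real (cell E SW T) := hdep SW hSW
  have hL : DependencyBound lam p k SL fun T => μ.real (cell E SL T) := hdep SL hSL
  have hV := hSLopt SW hSW
  rw [integral_log_mean_return_eq μ hE ha hab.le hk hSW,
    integral_log_mean_return_eq μ hE ha hab.le hk hSL, add_le_add_iff_left,
    sum_powerset_mul_log_one_add_eq, sum_powerset_mul_log_one_add_eq] at hV
  have hR := hW.sum_mul_sub_sum_mul_le hL hSW hSL hlam0 hp.le hp1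
    (φ := fun j => Real.log (1 + j * x) - Real.log (1 + x))
    (fun j hj => sub_nonneg.2 (log_one_add_le_log_one_add_nat_mul hx.le hj))
    (fun j hj => log_one_add_nat_mul_sub_log_le_choose_two hx.le hj)
  have hU : Real.log (1 + x) * (μ.real (⋃ i ∈ SW, E i) - μ.real (⋃ i ∈ SL, E i)) ≤
      lam * (k * p * (1 - p)) := by
    rw [measureReal_biUnion_eq_sum_cell μ hE, measureReal_biUnion_eq_sum_cell μ hE]
    linarith [mul_le_mul_of_nonneg_left (two_mul_choose_two_mul_sq_le (k := k) hp.le hkp) hlam0]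
  have hUW : (1 - lam) * (1 - (1 - p) ^ k) ≤ μ.real (⋃ i ∈ SW, E i) :=
    measureReal_biUnion_eq_sum_cell μ hE ▸ hW.le_sum hSW
  have hpow : (1 - p) ^ k < 1 := pow_lt_one₀ (by linarith) (by linarith) (by omega)
  have hζ := one_le_tsum_one_div_add_one_pow (by norm_num : 1 < 3)
  rw [← measureReal_def, ← measureReal_def]
  refine (sub_div_le_of_mul_sub_le (Real.log_pos (by linarith)) (mul_pos (by linarith) (by linarith))
    hUW (by positivity) (by linarith : 1 ≤ 2 * ∑' n : ℕ, 1 / ((n : ℝ) + 1) ^ 3) hU).trans_eq ?_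
  ring

/-- Main comparison theorem: under the dependency assumption with parameters
`λ ∈ [0,1)` and `p ∈ (0,1/k]`, the picking-winners-optimal portfolio `S_W` and the
log-optimal portfolio `S_L` satisfy
`(U(S_W) - U(S_L)) / U(S_W) ≤ 2ζ(3)λkp(1-p) / (ln(1+(b-a)/(ka))(1-λ)(1-(1-p)^k))`. -/
theorem picking_winners_vs_log_optimal {Ω : Type*} [MeasurableSpace Ω] (μ : Measure Ω)
    [IsProbabilityMeasure μ] {m : ℕ} (E : Fin m → Set Ω)
    (hE : ∀ i, MeasurableSet (E i))
    (a b : ℝ) (ha : 0 < a) (hab : a < b)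
    (k : ℕ) (hk : 1 ≤ k) (hkm : k ≤ m)
    (lam p : ℝ) (hlam : lam ∈ Set.Ico (0 : ℝ) 1) (hp : 0 < p) (hpk : p ≤ 1 / k)
    (hdep : ∀ S : Finset (Fin m), S.card = k → ∀ T ⊆ S, T.Nonempty →
      (1 - lam) * p ^ T.card * (1 - p) ^ (k - T.card) ≤
          (μ ((⋂ i ∈ T, E i) ∩ (⋂ i ∈ S \ T, (E i)ᶜ))).toReal ∧
        (μ ((⋂ i ∈ T, E i) ∩ (⋂ i ∈ S \ T, (E i)ᶜ))).toReal ≤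
          (1 + lam) * p ^ T.card * (1 - p) ^ (k - T.card))
    (SW SL : Finset (Fin m)) (hSW : SW.card = k) (hSL : SL.card = k)
    (hSWopt : ∀ S : Finset (Fin m), S.card = k →
      (μ (⋃ i ∈ S, E i)).toReal ≤ (μ (⋃ i ∈ SW, E i)).toReal)
    (hSLopt : ∀ S : Finset (Fin m), S.card = k →
      (∫ ω, Real.log ((∑ i ∈ S, (if ω ∈ E i then b else a)) / k) ∂μ) ≤
        ∫ ω, Real.log ((∑ i ∈ SL, (if ω ∈ E i then b else a)) / k) ∂μ) :
    ((μ (⋃ i ∈ SW, E i)).toReal - (μ (⋃ i ∈ SL, E i)).toReal) /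
        (μ (⋃ i ∈ SW, E i)).toReal ≤
      2 * (∑' n : ℕ, 1 / ((n : ℝ) + 1) ^ 3) * lam * k * p * (1 - p) /
        (Real.log (1 + (b - a) / (k * a)) * (1 - lam) * (1 - (1 - p) ^ k)) :=
  picking_winners_vs_log_optimal_general μ E hE a b ha hab k hk lam p hlam hp hpk hdep SW SL hSW hSL
    hSLopt
end
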